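/- At every point of U and for all 1 ≤ i, j ≤ n, the Poisson bracket satisfies {μ_i, μ_j} = 0. -/

import Mathlib

open Matrix Finset

/-- Shorthand for the phase space `ℂⁿ × ℂⁿ`. -/
abbrev CP (n : ℕ) := (Fin n → ℂ) × (Fin n → ℂ)

/-- The coefficient vector of the interpolation polynomial, via the Vandermonde matrix. -/
noncomputable def gAux (n : ℕ) (p : CP n) : Fin n → ℂ :=
  (Matrix.vandermonde p.1)⁻¹ *ᵥ p.2

lemma diffAt_finset_prod {E : Type*} [NormedAddCommGroup E] [NormedSpace ℂ E]
    {ι : Type*} (s : Finset ι) (f : ι → E → ℂ) {x : E}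
    (h : ∀ i ∈ s, DifferentiableAt ℂ (f i) x) :
    DifferentiableAt ℂ (fun y => ∏ i ∈ s, f i y) x := by
  classical
  induction s using Finset.induction with
  | empty => simp
  | @insert a s hni ih =>
      simp only [Finset.prod_insert hni]
      exact (h _ (Finset.mem_insert_self _ _)).mul
        (ih fun i hi => h i (Finset.mem_insert_of_mem hi))

lemma diffAt_det {n : ℕ} {E : Type*} [NormedAddCommGroup E] [NormedSpace ℂ E]
    (M : E → Matrix (Fin n) (Fin n) ℂ) {x : E}
    (h : ∀ a b, DifferentiableAt ℂ (fun y => M y a b) x) :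
    DifferentiableAt ℂ (fun y => (M y).det) x := by
  simp only [Matrix.det_apply']
  exact DifferentiableAt.fun_sum fun σ _ =>
    (diffAt_finset_prod _ _ fun i _ => h _ _).const_mul _

lemma diffAt_coord1 {n : ℕ} (m : Fin n) (q : CP n) :
    DifferentiableAt ℂ (fun p : CP n => p.1 m) q :=
  ((ContinuousLinearMap.proj m).comp
    (ContinuousLinearMap.fst ℂ (Fin n → ℂ) (Fin n → ℂ))).differentiableAt

lemma diffAt_coord2 {n : ℕ} (m : Fin n) (q : CP n) :
    DifferentiableAt ℂ (fun p : CP n => p.2 m) q :=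
  ((ContinuousLinearMap.proj m).comp
    (ContinuousLinearMap.snd ℂ (Fin n → ℂ) (Fin n → ℂ))).differentiableAt

lemma gAux_eq (n : ℕ) (p : CP n) (k : Fin n) :
    gAux n p k = (Matrix.vandermonde p.1).det⁻¹
      * ∑ m, (Matrix.vandermonde p.1).adjugate k m * p.2 m := by
  simp [gAux, Matrix.inv_def, Matrix.smul_mulVec, Ring.inverse_eq_inv',
    Matrix.mulVec, dotProduct, Finset.mul_sum, mul_assoc]

lemma diffAt_vand {n : ℕ} (a b : Fin n) (q : CP n) :
    DifferentiableAt ℂ (fun p : CP n => Matrix.vandermonde p.1 a b) q := by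
  simpa [Matrix.vandermonde_apply] using (diffAt_coord1 a q).fun_pow (b : ℕ)

lemma gAux_diff (n : ℕ) (k : Fin n) (q : CP n)
    (hdet : (Matrix.vandermonde q.1).det ≠ 0) :
    DifferentiableAt ℂ (fun p => gAux n p k) q := by
  have hdetdiff : DifferentiableAt ℂ (fun p : CP n => (Matrix.vandermonde p.1).det) q :=
    diffAt_det _ (fun a b => diffAt_vand a b q)
  have hadj : ∀ m : Fin n,
      DifferentiableAt ℂ (fun p : CP n => (Matrix.vandermonde p.1).adjugate k m) q := by
    intro m
    simp only [Matrix.adjugate_apply]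
    apply diffAt_det
    intro a b
    simp only [Matrix.updateRow_apply]
    by_cases hab : a = m
    · simp [hab]
    · simpa [hab] using diffAt_vand a b q
  simp only [gAux_eq]
  exact (hdetdiff.inv hdet).mul
    (DifferentiableAt.fun_sum fun m _ => (hadj m).mul (diffAt_coord2 m q))

lemma muFun_eq_gAux (n : ℕ) (hn : 1 ≤ n) (k : ℕ) (hk : k < n) (p : CP n)
    (hdet : (Matrix.vandermonde p.1).det ≠ 0) :
    (Lagrange.interpolate Finset.univ p.1 p.2).coeff k = gAux n p ⟨k, hk⟩ := by
  have hinj : Function.Injective p.1 := Matrix.det_vandermonde_ne_zero_iff.mp hdet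
  set P := Lagrange.interpolate Finset.univ p.1 p.2 with hP
  have hdeg : P.natDegree < n := by
    have h1 := Lagrange.degree_interpolate_lt (s := Finset.univ) p.2
      (Set.injOn_of_injective hinj)
    rcases eq_or_ne P 0 with h0 | h0
    · simpa [h0] using (show 0 < n by omega)
    · rw [Polynomial.natDegree_lt_iff_degree_lt h0]
      simpa [hP] using h1
  have hmv : Matrix.vandermonde p.1 *ᵥ (fun k : Fin n => P.coeff (k : ℕ)) = p.2 := by
    funext m
    have hev : P.eval (p.1 m) = p.2 m :=
      Lagrange.eval_interpolate_at_node p.2 (Set.injOn_of_injective hinj) (Finset.mem_univ m)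
    have heval := Polynomial.eval_eq_sum_range' hdeg (p.1 m)
    rw [hev] at heval
    calc (Matrix.vandermonde p.1 *ᵥ fun k : Fin n => P.coeff (k : ℕ)) m
        = ∑ k : Fin n, p.1 m ^ (k : ℕ) * P.coeff (k : ℕ) := by
          simp [Matrix.mulVec, dotProduct, Matrix.vandermonde_apply]
      _ = ∑ k ∈ Finset.range n, P.coeff k * p.1 m ^ k := by
          rw [Finset.sum_range fun k => P.coeff k * p.1 m ^ k]
          exact Finset.sum_congr rfl fun k _ => mul_comm _ _
      _ = p.2 m := heval.symm
  have hfin : gAux n p = fun k : Fin n => P.coeff (k : ℕ) := by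
    rw [gAux, ← hmv, Matrix.mulVec_mulVec,
      Matrix.nonsing_inv_mul _ (isUnit_iff_ne_zero.mpr hdet), Matrix.one_mulVec]
  rw [hfin]

lemma cont_det {n : ℕ} : Continuous (fun p : CP n => (Matrix.vandermonde p.1).det) := by
  apply Continuous.matrix_det
  apply continuous_matrix
  intro a b
  exact ((continuous_apply a).comp continuous_fst).pow _

/-- Projection onto the `m`-th `x`-coordinate as a continuous linear map. -/
noncomputable def PmL (n : ℕ) (m : Fin n) : CP n →L[ℂ] ℂ :=
  (ContinuousLinearMap.proj m).comp (ContinuousLinearMap.fst ℂ (Fin n → ℂ) (Fin n → ℂ))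

/-- Projection onto the `m`-th `y`-coordinate as a continuous linear map. -/
noncomputable def PmR (n : ℕ) (m : Fin n) : CP n →L[ℂ] ℂ :=
  (ContinuousLinearMap.proj m).comp (ContinuousLinearMap.snd ℂ (Fin n → ℂ) (Fin n → ℂ))

lemma hpow {n : ℕ} (q : CP n) (m : Fin n) (k : ℕ) :
    HasFDerivAt (fun p : CP n => (p.1 m) ^ k)
      (((k : ℂ) * q.1 m ^ (k - 1)) • PmL n m) q :=
  (hasDerivAt_pow k (q.1 m)).comp_hasFDerivAt q ((PmL n m).hasFDerivAt)

lemma key_eq {n : ℕ} (q : CP n) (hdet : (Matrix.vandermonde q.1).det ≠ 0) (m : Fin n) :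
    (∑ k : Fin n, (gAux n q k • ((((k : ℕ) : ℂ) * q.1 m ^ ((k : ℕ) - 1)) • PmL n m)
        + (q.1 m ^ (k : ℕ)) • fderiv ℂ (fun p => gAux n p k) q)) = PmR n m := by
  have hev : ∀ᶠ p in nhds q, (Matrix.vandermonde p.1).det ≠ 0 :=
    cont_det.continuousAt.eventually_ne hdet
  have h1 : HasFDerivAt (fun p : CP n => ∑ k : Fin n, gAux n p k * (p.1 m) ^ (k : ℕ))
      (∑ k : Fin n, (gAux n q k • ((((k : ℕ) : ℂ) * q.1 m ^ ((k : ℕ) - 1)) • PmL n m)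
        + (q.1 m ^ (k : ℕ)) • fderiv ℂ (fun p => gAux n p k) q)) q :=
    HasFDerivAt.fun_sum fun k _ => ((gAux_diff n k q hdet).hasFDerivAt).mul (hpow q m (k : ℕ))
  have heq : (fun p : CP n => p.2 m)
      =ᶠ[nhds q] (fun p : CP n => ∑ k : Fin n, gAux n p k * (p.1 m) ^ (k : ℕ)) := by
    filter_upwards [hev] with p hp
    have hmv : Matrix.vandermonde p.1 *ᵥ gAux n p = p.2 := by
      rw [gAux, Matrix.mulVec_mulVec, Matrix.mul_nonsing_inv _ (isUnit_iff_ne_zero.mpr hp),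
        Matrix.one_mulVec]
    calc p.2 m = (Matrix.vandermonde p.1 *ᵥ gAux n p) m := by rw [hmv]
      _ = ∑ k : Fin n, gAux n p k * (p.1 m) ^ (k : ℕ) := by
          simp [Matrix.mulVec, dotProduct, Matrix.vandermonde_apply, mul_comm]
  exact (h1.congr_of_eventuallyEq heq).unique ((PmR n m).hasFDerivAt)

/-- The function `μ_i` on `ℂⁿ × ℂⁿ`: the coefficient of `T^{i-1}` in the Lagrange
interpolation polynomial `Q` of degree `< n` with `Q(x_l) = y_l` for all `l`. -/
noncomputable def muFun (n i : ℕ) (q : (Fin n → ℂ) × (Fin n → ℂ)) : ℂ :=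
  (Lagrange.interpolate Finset.univ q.1 q.2).coeff (i - 1)

/-- The Poisson bracket `{f,g} = Σ_l (∂f/∂x_l ∂g/∂y_l − ∂f/∂y_l ∂g/∂x_l)` at a point,
with complex partial derivatives. -/
noncomputable def poissonAt {n : ℕ} (f g : (Fin n → ℂ) × (Fin n → ℂ) → ℂ)
    (q : (Fin n → ℂ) × (Fin n → ℂ)) : ℂ :=
  ∑ l : Fin n,
    (fderiv ℂ f q (Pi.single l 1, 0) * fderiv ℂ g q (0, Pi.single l 1)
      - fderiv ℂ f q (0, Pi.single l 1) * fderiv ℂ g q (Pi.single l 1, 0))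

theorem stmt13 (n : ℕ) (hn : 1 ≤ n) (i j : ℕ)
    (hi1 : 1 ≤ i) (hin : i ≤ n) (hj1 : 1 ≤ j) (hjn : j ≤ n)
    (q : (Fin n → ℂ) × (Fin n → ℂ)) (hq : Function.Injective q.1) :
    poissonAt (muFun n i) (muFun n j) q = 0 := by
  classical
  have hdet : (Matrix.vandermonde q.1).det ≠ 0 := Matrix.det_vandermonde_ne_zero_iff.mpr hq
  have hi' : i - 1 < n := by omega
  have hj' : j - 1 < n := by omega
  have hev : ∀ᶠ p in nhds q, (Matrix.vandermonde p.1).det ≠ 0 :=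
    cont_det.continuousAt.eventually_ne hdet
  have hmufd : ∀ (i0 : ℕ) (h : i0 - 1 < n),
      fderiv ℂ (muFun n i0) q = fderiv ℂ (fun p => gAux n p ⟨i0 - 1, h⟩) q := by
    intro i0 h
    apply Filter.EventuallyEq.fderiv_eq
    filter_upwards [hev] with p hp
    exact muFun_eq_gAux n hn (i0 - 1) h p hp
  unfold poissonAt
  rw [hmufd i hi', hmufd j hj']
  apply Finset.sum_eq_zero
  intro l _
  set s : ℂ := ∑ k : Fin n, gAux n q k * (((k : ℕ) : ℂ) * q.1 l ^ ((k : ℕ) - 1)) with hs_def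
  have ha : ∀ m : Fin n,
      ∑ k : Fin n, q.1 m ^ (k : ℕ)
        * fderiv ℂ (fun p => gAux n p k) q (0, Pi.single l 1) = (Pi.single l 1 : Fin n → ℂ) m := by
    intro m
    have h := ContinuousLinearMap.ext_iff.mp (key_eq q hdet m)
      (((0 : Fin n → ℂ), Pi.single l 1) : CP n)
    simpa only [ContinuousLinearMap.coe_sum', Finset.sum_apply, ContinuousLinearMap.add_apply,
      ContinuousLinearMap.coe_smul', Pi.smul_apply, PmL, PmR, ContinuousLinearMap.coe_comp',
      Function.comp_apply, ContinuousLinearMap.coe_fst', ContinuousLinearMap.coe_snd',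
      ContinuousLinearMap.proj_apply, smul_eq_mul, Pi.zero_apply, mul_zero, zero_add] using h
  have hb : ∀ m : Fin n,
      ∑ k : Fin n, (gAux n q k * (((k : ℕ) : ℂ) * q.1 m ^ ((k : ℕ) - 1) * (Pi.single l 1 : Fin n → ℂ) m)
        + q.1 m ^ (k : ℕ) * fderiv ℂ (fun p => gAux n p k) q (Pi.single l 1, 0)) = 0 := by
    intro m
    have h := ContinuousLinearMap.ext_iff.mp (key_eq q hdet m)
      ((Pi.single l (1 : ℂ), 0) : CP n)
    simpa only [ContinuousLinearMap.coe_sum', Finset.sum_apply, ContinuousLinearMap.add_apply,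
      ContinuousLinearMap.coe_smul', Pi.smul_apply, PmL, PmR, ContinuousLinearMap.coe_comp',
      Function.comp_apply, ContinuousLinearMap.coe_fst', ContinuousLinearMap.coe_snd',
      ContinuousLinearMap.proj_apply, smul_eq_mul, Pi.zero_apply] using h
  have hba : ∀ k : Fin n,
      fderiv ℂ (fun p => gAux n p k) q (Pi.single l 1, 0)
        = -s * fderiv ℂ (fun p => gAux n p k) q (0, Pi.single l 1) := by
    have h0 : (fun k : Fin n => fderiv ℂ (fun p => gAux n p k) q (Pi.single l 1, 0)
        + s * fderiv ℂ (fun p => gAux n p k) q (0, Pi.single l 1)) = 0 := by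
      apply Matrix.eq_zero_of_mulVec_eq_zero hdet
      funext m
      have hsingle : ∑ k : Fin n,
          gAux n q k * (((k : ℕ) : ℂ) * q.1 m ^ ((k : ℕ) - 1) * (Pi.single l 1 : Fin n → ℂ) m)
          = s * (Pi.single l 1 : Fin n → ℂ) m := by
        by_cases hm : m = l
        · subst hm
          rw [hs_def, Finset.sum_mul]
          exact Finset.sum_congr rfl fun k _ => by ring
        · simp [Pi.single_eq_of_ne hm]
      have hbm := hb m
      rw [Finset.sum_add_distrib, hsingle] at hbm
      have ham := ha m
      calc (Matrix.vandermonde q.1 *ᵥ fun k : Fin n =>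
            fderiv ℂ (fun p => gAux n p k) q (Pi.single l 1, 0)
              + s * fderiv ℂ (fun p => gAux n p k) q (0, Pi.single l 1)) m
          = (∑ k : Fin n, q.1 m ^ (k : ℕ)
                * fderiv ℂ (fun p => gAux n p k) q (Pi.single l 1, 0))
            + s * ∑ k : Fin n, q.1 m ^ (k : ℕ)
                * fderiv ℂ (fun p => gAux n p k) q (0, Pi.single l 1) := by
            simp [Matrix.mulVec, dotProduct, Matrix.vandermonde_apply, mul_add,
              Finset.sum_add_distrib, Finset.mul_sum]
            exact Finset.sum_congr rfl fun k _ => by ring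
        _ = 0 := by rw [ham]; linear_combination hbm
    intro k
    have := congrFun h0 k
    simp only [Pi.zero_apply] at this
    linear_combination this
  rw [hba ⟨i - 1, hi'⟩, hba ⟨j - 1, hj'⟩]
  ring
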